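/- Let S_{TΛΓU} be the frame operator for the pair of a (T,T)-controlled g-fusion Bessel sequence Λ_T = {(W_j, Λ_j, w_j)}_{j∈J} with bound D₁ and a (U,U)-controlled g-fusion Bessel sequence Γ_U = {(V_j, Γ_j, v_j)}_{j∈J} with bound D₂ (so S_{TΛΓU} f = ∑_{j∈J} v_j w_j T* P_{W_j} Λ_j* Γ_j P_{V_j} U f). Suppose λ₁ < 1 and λ₂ > −1 are real numbers such that ‖f − S_{TΛΓU} f‖ ≤ λ₁ ‖f‖ + λ₂ ‖S_{TΛΓU} f‖ for all f ∈ H. Then for every f ∈ H, (1/D₁) ((1 − λ₁)/(1 + λ₂))² ‖f‖² ≤ ∑_{j∈J} v_j² ‖Γ_j P_{V_j} U f‖²; that is, Γ_U is a (U,U)-controlled g-fusion frame for H with bounds (1/D₁)((1 − λ₁)/(1 + λ₂))² and D₂. -/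

import Mathlib

open ContinuousLinearMap
open scoped ComplexInnerProductSpace

/-- The orthogonal projection of `H` onto a closed subspace `W`, viewed as an operator
`H →L[ℂ] H`. -/
noncomputable def proj {H : Type*} [NormedAddCommGroup H] [InnerProductSpace ℂ H]
    (W : Submodule ℂ H) [Submodule.HasOrthogonalProjection W] : H →L[ℂ] H :=
  W.subtypeL.comp (Submodule.orthogonalProjectionOnto W)


lemma tsum_cs {J : Type*} (a b : J → ℝ) (ha : ∀ j, 0 ≤ a j) (hb : ∀ j, 0 ≤ b j)
    (ha2 : Summable fun j => a j ^ 2) (hb2 : Summable fun j => b j ^ 2) :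
    (∑' j, a j * b j) ≤ Real.sqrt (∑' j, a j ^ 2) * Real.sqrt (∑' j, b j ^ 2) := by
  have hs : Summable fun j => a j * b j := by
    refine Summable.of_nonneg_of_le (fun j => mul_nonneg (ha j) (hb j))
      (fun j => ?_) (ha2.add hb2)
    nlinarith [sq_nonneg (a j - b j)]
  refine Summable.tsum_le_of_sum_le hs fun s => ?_
  calc ∑ j ∈ s, a j * b j ≤ Real.sqrt (∑ j ∈ s, a j ^ 2) * Real.sqrt (∑ j ∈ s, b j ^ 2) :=
        Real.sum_mul_le_sqrt_mul_sqrt s a b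
    _ ≤ Real.sqrt (∑' j, a j ^ 2) * Real.sqrt (∑' j, b j ^ 2) := by
        have h1 := Real.sqrt_le_sqrt (Summable.sum_le_tsum s (fun i _ => sq_nonneg (a i)) ha2)
        have h2 := Real.sqrt_le_sqrt (Summable.sum_le_tsum s (fun i _ => sq_nonneg (b i)) hb2)
        exact mul_le_mul h1 h2 (Real.sqrt_nonneg _) (Real.sqrt_nonneg _)


lemma proj_inner {H : Type*} [NormedAddCommGroup H] [InnerProductSpace ℂ H]
    (W : Submodule ℂ H) [Submodule.HasOrthogonalProjection W] (x y : H) :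
    ⟪x, proj W y⟫ = ⟪proj W x, y⟫ :=
  (Submodule.inner_starProjection_left_eq_right W x y).symm

/-- if the frame operator `S_{TΛΓU}` of the pair `(Λ_T, Γ_U)` satisfies
`‖f − S f‖ ≤ λ₁ ‖f‖ + λ₂ ‖S f‖` with `λ₁ < 1`, `λ₂ > −1`, then `Γ_U` is a
`(U,U)`-controlled g-fusion frame with bounds `(1/D₁)((1 − λ₁)/(1 + λ₂))²` and `D₂`. -/
theorem stmt13
    {H : Type*} [NormedAddCommGroup H] [InnerProductSpace ℂ H] [CompleteSpace H]
    {J : Type*} [Countable J]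
    {Hj : J → Type*} [∀ j, NormedAddCommGroup (Hj j)] [∀ j, InnerProductSpace ℂ (Hj j)]
    [∀ j, CompleteSpace (Hj j)]
    (W V : J → Submodule ℂ H) [∀ j, CompleteSpace (W j)] [∀ j, CompleteSpace (V j)]
    (w v : J → ℝ) (hw : ∀ j, 0 < w j) (hv : ∀ j, 0 < v j)
    (Λ Γ : ∀ j, H →L[ℂ] Hj j)
    (T U : H →L[ℂ] H)
    -- `T` and `U` are invertible
    (Tinv Uinv : H →L[ℂ] H)
    (hT₁ : Tinv ∘L T = 1) (hT₂ : T ∘L Tinv = 1)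
    (hU₁ : Uinv ∘L U = 1) (hU₂ : U ∘L Uinv = 1)
    -- `Λ_T` is a `(T,T)`-controlled g-fusion Bessel sequence with bound `D₁`
    (D₁ : ℝ) (hD₁ : 0 < D₁)
    (hsumΛ : ∀ f : H, Summable fun j => (w j) ^ 2 * ‖(Λ j) (proj (W j) (T f))‖ ^ 2)
    (hBesselΛ : ∀ f : H,
      (∑' j, (w j) ^ 2 * ‖(Λ j) (proj (W j) (T f))‖ ^ 2) ≤ D₁ * ‖f‖ ^ 2)
    -- `Γ_U` is a `(U,U)`-controlled g-fusion Bessel sequence with bound `D₂`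
    (D₂ : ℝ) (hD₂ : 0 < D₂)
    (hsumΓ : ∀ f : H, Summable fun j => (v j) ^ 2 * ‖(Γ j) (proj (V j) (U f))‖ ^ 2)
    (hBesselΓ : ∀ f : H,
      (∑' j, (v j) ^ 2 * ‖(Γ j) (proj (V j) (U f))‖ ^ 2) ≤ D₂ * ‖f‖ ^ 2)
    -- `S` is the frame operator `S_{TΛΓU}` for the pair `(Λ_T, Γ_U)`
    (S : H →L[ℂ] H)
    (hS : ∀ f : H, HasSum
      (fun j => (v j * w j) •
        (adjoint T) (proj (W j) ((adjoint (Λ j)) ((Γ j) (proj (V j) (U f)))))) (S f))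
    (lam₁ lam₂ : ℝ) (hlam₁ : lam₁ < 1) (hlam₂ : -1 < lam₂)
    (hpert : ∀ f : H, ‖f - S f‖ ≤ lam₁ * ‖f‖ + lam₂ * ‖S f‖) :
    ∀ f : H,
      (1 / D₁) * ((1 - lam₁) / (1 + lam₂)) ^ 2 * ‖f‖ ^ 2
          ≤ (∑' j, (v j) ^ 2 * ‖(Γ j) (proj (V j) (U f))‖ ^ 2) ∧
      (∑' j, (v j) ^ 2 * ‖(Γ j) (proj (V j) (U f))‖ ^ 2) ≤ D₂ * ‖f‖ ^ 2 := by
  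
  intro f
  refine ⟨?_, hBesselΓ f⟩
  set A := ∑' j, (v j) ^ 2 * ‖(Γ j) (proj (V j) (U f))‖ ^ 2 with hAdef
  have hA0 : 0 ≤ A := tsum_nonneg fun j => by positivity
  -- the key estimate on inner products against `S f`
  have bound : ∀ g : H, ‖(⟪g, S f⟫ : ℂ)‖ ≤
      Real.sqrt (∑' j, (w j) ^ 2 * ‖(Λ j) (proj (W j) (T g))‖ ^ 2) * Real.sqrt A := by
    intro g
    set a := fun j => w j * ‖(Λ j) (proj (W j) (T g))‖ with hadef
    set b := fun j => v j * ‖(Γ j) (proj (V j) (U f))‖ with hbdef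
    have ha : ∀ j, 0 ≤ a j := fun j => mul_nonneg (hw j).le (norm_nonneg _)
    have hb : ∀ j, 0 ≤ b j := fun j => mul_nonneg (hv j).le (norm_nonneg _)
    have ha2 : Summable fun j => a j ^ 2 := by
      simpa [hadef, mul_pow] using hsumΛ g
    have hb2 : Summable fun j => b j ^ 2 := by
      simpa [hbdef, mul_pow] using hsumΓ f
    have hab : Summable fun j => a j * b j := by
      refine Summable.of_nonneg_of_le (fun j => mul_nonneg (ha j) (hb j))
        (fun j => ?_) (ha2.add hb2)
      nlinarith [sq_nonneg (a j - b j)]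
    have hterm : ∀ j, (⟪g, (v j * w j) •
        (adjoint T) (proj (W j) ((adjoint (Λ j)) ((Γ j) (proj (V j) (U f)))))⟫ : ℂ)
        = ((v j * w j : ℝ) : ℂ) * (⟪(Λ j) (proj (W j) (T g)), (Γ j) (proj (V j) (U f))⟫ : ℂ) := by
      intro j
      rw [RCLike.real_smul_eq_coe_smul (K := ℂ), inner_smul_right, adjoint_inner_right,
        proj_inner, adjoint_inner_right]
      norm_cast
    have h1 : HasSum (fun j => (⟪g, (v j * w j) •
        (adjoint T) (proj (W j) ((adjoint (Λ j)) ((Γ j) (proj (V j) (U f)))))⟫ : ℂ))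
        (⟪g, S f⟫ : ℂ) := (hS f).mapL (innerSL ℂ g)
    have h2 : ‖(⟪g, S f⟫ : ℂ)‖ ≤ ∑' j, a j * b j := by
      rw [← h1.tsum_eq]
      refine tsum_of_norm_bounded hab.hasSum fun j => ?_
      rw [hterm j, norm_mul, Complex.norm_real, Real.norm_eq_abs,
        abs_of_nonneg (mul_nonneg (hv j).le (hw j).le)]
      calc v j * w j * ‖(⟪(Λ j) (proj (W j) (T g)), (Γ j) (proj (V j) (U f))⟫ : ℂ)‖
          ≤ v j * w j * (‖(Λ j) (proj (W j) (T g))‖ * ‖(Γ j) (proj (V j) (U f))‖) :=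
            mul_le_mul_of_nonneg_left (norm_inner_le_norm _ _)
              (mul_nonneg (hv j).le (hw j).le)
        _ = a j * b j := by simp only [hadef, hbdef]; ring
    refine h2.trans ?_
    have := tsum_cs a b ha hb ha2 hb2
    have e1 : (∑' j, a j ^ 2) = ∑' j, (w j) ^ 2 * ‖(Λ j) (proj (W j) (T g))‖ ^ 2 := by
      simp [hadef, mul_pow]
    have e2 : (∑' j, b j ^ 2) = A := by
      simp [hAdef, hbdef, mul_pow]
    rwa [e1, e2] at this
  -- hence `‖S f‖² ≤ D₁ * A`
  have hSf2 : ‖S f‖ ^ 2 ≤ Real.sqrt D₁ * ‖S f‖ * Real.sqrt A := by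
    have h := bound (S f)
    rw [inner_self_eq_norm_sq_to_K] at h
    simp only [norm_pow, RCLike.norm_ofReal, abs_norm] at h
    refine h.trans ?_
    have h3 : Real.sqrt (∑' j, (w j) ^ 2 * ‖(Λ j) (proj (W j) (T (S f)))‖ ^ 2)
        ≤ Real.sqrt (D₁ * ‖S f‖ ^ 2) := Real.sqrt_le_sqrt (hBesselΛ (S f))
    have h4 : Real.sqrt (D₁ * ‖S f‖ ^ 2) = Real.sqrt D₁ * ‖S f‖ := by
      rw [Real.sqrt_mul hD₁.le, Real.sqrt_sq (norm_nonneg _)]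
    rw [h4] at h3
    exact mul_le_mul_of_nonneg_right h3 (Real.sqrt_nonneg _)
  have key : ‖S f‖ ^ 2 ≤ D₁ * A := by
    rcases eq_or_lt_of_le (norm_nonneg (S f)) with hz | hz
    · rw [← hz]
      simpa using mul_nonneg hD₁.le hA0
    · have h4 : ‖S f‖ * ‖S f‖ ≤ (Real.sqrt D₁ * Real.sqrt A) * ‖S f‖ := by
        nlinarith [hSf2]
      have h3 : ‖S f‖ ≤ Real.sqrt D₁ * Real.sqrt A := le_of_mul_le_mul_right h4 hz
      have h5 := pow_le_pow_left₀ (norm_nonneg (S f)) h3 2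
      rw [mul_pow, Real.sq_sqrt hD₁.le, Real.sq_sqrt hA0] at h5
      exact h5
  -- the perturbation estimate
  have hlow : ((1 - lam₁) / (1 + lam₂)) * ‖f‖ ≤ ‖S f‖ := by
    have h1 : ‖f‖ - ‖S f‖ ≤ ‖f - S f‖ := norm_sub_norm_le _ _
    have h2 := hpert f
    have hden : 0 < 1 + lam₂ := by linarith
    rw [div_mul_eq_mul_div, div_le_iff₀ hden]
    nlinarith [norm_nonneg f, norm_nonneg (S f)]
  have hlow2 : ((1 - lam₁) / (1 + lam₂)) ^ 2 * ‖f‖ ^ 2 ≤ ‖S f‖ ^ 2 := by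
    have hc : 0 ≤ (1 - lam₁) / (1 + lam₂) :=
      div_nonneg (by linarith) (by linarith)
    have := pow_le_pow_left₀ (mul_nonneg hc (norm_nonneg f)) hlow 2
    rwa [mul_pow] at this
  rw [one_div, mul_assoc, inv_mul_le_iff₀ hD₁]
  exact hlow2.trans key
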